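/- Let A be a finite-dimensional algebra over a field k, let e be an idempotent of A, and let ⟨e⟩ = AeA be the corresponding idempotent ideal. For a finitely generated left A-module M and an integer l ≥ 0, M admits an injective coresolution 0 → M → I_0 → I_1 → ⋯ with I_i ∈ add(D(eA)) for all 0 ≤ i ≤ l if and only if Ext^i_A(A/⟨e⟩, M) = 0 for all 0 ≤ i ≤ l. -/

import Mathlib

open CategoryTheory

noncomputable section

/-- Vanishing of the `n`-th Ext group of two `A`-modules. -/
def ExtVanish (A : Type) [Ring A] (n : ℕ) (X Y : ModuleCat.{0} A) : Prop :=
  Limits.IsZero (((Ext ℤ (ModuleCat.{0} A) n).obj (Opposite.op X)).obj Y)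

/-- `M` belongs to `add X`: it is a direct summand of a finite direct sum of copies of `X`. -/
def InAdd (A : Type) [Ring A] (X M : ModuleCat.{0} A) : Prop :=
  ∃ (n : ℕ) (i : M →ₗ[A] (Fin n → X)) (p : (Fin n → X) →ₗ[A] M),
    p.comp i = LinearMap.id

/-- `N` is a (first) syzygy of `M`: there is an exact sequence `0 → N → P → M → 0`
with `P` projective. -/
def IsSyzygyOf (A : Type) [Ring A] (N M : ModuleCat.{0} A) : Prop :=
  ∃ (P : ModuleCat.{0} A), Module.Projective A P ∧
    ∃ (ι : N →ₗ[A] P) (π : P →ₗ[A] M),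
      Function.Injective ι ∧ Function.Surjective π ∧ Function.Exact ι π

/-- `N` is an `n`-th syzygy of `M`. -/
def IsNthSyzygyOf (A : Type) [Ring A] : ℕ → ModuleCat.{0} A → ModuleCat.{0} A → Prop
  | 0, N, M => Nonempty (N ≅ M)
  | n + 1, N, M => ∃ K : ModuleCat.{0} A, IsSyzygyOf A K M ∧ IsNthSyzygyOf A n N K

/-- `N` is a (first) cosyzygy of `M`: there is an exact sequence `0 → M → I → N → 0`
with `I` injective. -/
def IsCosyzygyOf (A : Type) [Ring A] (N M : ModuleCat.{0} A) : Prop :=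
  ∃ (I : ModuleCat.{0} A), Module.Injective A I ∧
    ∃ (ι : M →ₗ[A] I) (π : I →ₗ[A] N),
      Function.Injective ι ∧ Function.Surjective π ∧ Function.Exact ι π

/-- `N` is an `n`-th cosyzygy of `M`. -/
def IsNthCosyzygyOf (A : Type) [Ring A] : ℕ → ModuleCat.{0} A → ModuleCat.{0} A → Prop
  | 0, N, M => Nonempty (N ≅ M)
  | n + 1, N, M => ∃ K : ModuleCat.{0} A, IsCosyzygyOf A K M ∧ IsNthCosyzygyOf A n N K

/-- The projective dimension of `M` is at most `n`. -/
def ProjDimLE (A : Type) [Ring A] (n : ℕ) (M : ModuleCat.{0} A) : Prop :=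
  ∃ K : ModuleCat.{0} A, IsNthSyzygyOf A n K M ∧ Module.Projective A K

/-- The injective dimension of `M` is at most `n`. -/
def InjDimLE (A : Type) [Ring A] (n : ℕ) (M : ModuleCat.{0} A) : Prop :=
  ∃ K : ModuleCat.{0} A, IsNthCosyzygyOf A n K M ∧ Module.Injective A K

/-- The underlying type of `D(A) = Hom_k(A, k)`. -/
def DualMod (k A : Type) [Field k] [Ring A] [Algebra k A] : Type := A →ₗ[k] k

instance (k A : Type) [Field k] [Ring A] [Algebra k A] : AddCommGroup (DualMod k A) :=
  inferInstanceAs (AddCommGroup (A →ₗ[k] k))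

/-- Auxiliary scalar action for `DualMod`. -/
def dualSMul (k A : Type) [Field k] [Ring A] [Algebra k A] (a : A) (φ : A →ₗ[k] k) :
    A →ₗ[k] k := φ.comp (LinearMap.mulRight k a)

/-- The left `A`-module structure on `D(A)`: `(a • φ) x = φ (x * a)`. -/
instance (k A : Type) [Field k] [Ring A] [Algebra k A] : Module A (DualMod k A) where
  smul a φ := dualSMul k A a φ
  one_smul φ := by
    show dualSMul k A 1 φ = φ
    unfold dualSMul; ext x; show DFunLike.coe (F := A →ₗ[k] k) φ (x * 1) = DFunLike.coe (F := A →ₗ[k] k) φ x; simp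
  mul_smul a b φ := by
    show dualSMul k A (a * b) φ = dualSMul k A a (dualSMul k A b φ)
    unfold dualSMul; ext x
    show DFunLike.coe (F := A →ₗ[k] k) φ (x * (a * b)) = DFunLike.coe (F := A →ₗ[k] k) φ (x * a * b); rw [mul_assoc]
  smul_zero a := by
    show dualSMul k A a 0 = 0
    unfold dualSMul; ext x; simp
  smul_add a φ ψ := by
    show dualSMul k A a (φ + ψ) = dualSMul k A a φ + dualSMul k A a ψ
    unfold dualSMul; ext x; rfl
  add_smul a b φ := by
    show dualSMul k A (a + b) φ = dualSMul k A a φ + dualSMul k A b φ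
    unfold dualSMul; ext x
    show DFunLike.coe (F := A →ₗ[k] k) φ (x * (a + b)) = DFunLike.coe (F := A →ₗ[k] k) φ (x * a) + DFunLike.coe (F := A →ₗ[k] k) φ (x * b)
    rw [mul_add]; exact (show A →ₗ[k] k from φ).map_add (x * a) (x * b)
  zero_smul φ := by
    show dualSMul k A 0 φ = 0
    unfold dualSMul; ext x; show DFunLike.coe (F := A →ₗ[k] k) φ (x * 0) = 0
    rw [mul_zero]; exact (show A →ₗ[k] k from φ).map_zero

/-- `D(A)`, the dual of the right regular module, as an object of `ModuleCat A`. -/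
def DualA (k A : Type) [Field k] [Ring A] [Algebra k A] : ModuleCat.{0} A :=
  ModuleCat.of A (DualMod k A)

/-- The idempotent ideal `⟨e⟩ = AeA`, as a left submodule of `A`. -/
def idemIdeal (A : Type) [Ring A] (e : A) : Submodule A A :=
  Submodule.span A (Set.range fun b : A => e * b)

/-- The quotient `A/⟨e⟩` as a left `A`-module. -/
def quotMod (A : Type) [Ring A] (e : A) : ModuleCat.{0} A :=
  ModuleCat.of A (A ⧸ idemIdeal A e)

/-- The left ideal `Ae = {x | x * e = x}` (for `e` idempotent), as a submodule of `A`. -/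
def leftPart (A : Type) [Ring A] (e : A) : Submodule A A where
  carrier := {x | x * e = x}
  add_mem' := by intro a b ha hb; simp only [Set.mem_setOf_eq] at *; rw [add_mul, ha, hb]
  zero_mem' := by simp
  smul_mem' := by intro c x hx; simp only [Set.mem_setOf_eq, smul_eq_mul] at *;
                  rw [mul_assoc, hx]

/-- `Ae` as an object of `ModuleCat A`. -/
def AeMod (A : Type) [Ring A] (e : A) : ModuleCat.{0} A :=
  ModuleCat.of A (leftPart A e)

/-- `M` is Gorenstein projective: `Ext^i_A(M, A) = 0` for all `i > 0`. -/
def IsGorensteinProjective (A : Type) [Ring A] (M : ModuleCat.{0} A) : Prop :=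
  ∀ i : ℕ, 0 < i → ExtVanish A i M (ModuleCat.of A A)

/-- `M` is Gorenstein injective: `Ext^i_A(D(A), M) = 0` for all `i > 0`. -/
def IsGorensteinInjective (k A : Type) [Field k] [Ring A] [Algebra k A]
    (M : ModuleCat.{0} A) : Prop :=
  ∀ i : ℕ, 0 < i → ExtVanish A i (DualA k A) M

/-- `M ∈ gen_l(Ae)`: `M` has a projective resolution whose terms in degrees `≤ l`
lie in `add (Ae)`. -/
def GenLE (A : Type) [Ring A] (e : A) (l : ℕ) (M : ModuleCat.{0} A) : Prop :=
  ∃ (P : ℕ → ModuleCat.{0} A) (d : ∀ n : ℕ, (P (n + 1) →ₗ[A] P n)) (π : P 0 →ₗ[A] M),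
    (∀ n, Module.Projective A (P n)) ∧
    Function.Surjective π ∧
    Function.Exact (d 0) π ∧
    (∀ n, Function.Exact (d (n + 1)) (d n)) ∧
    (∀ n ≤ l, InAdd A (AeMod A e) (P n))

/-- The underlying `k`-linear functional of an element of `D(A)`. -/
def DualMod.toLin {k A : Type} [Field k] [Ring A] [Algebra k A] (φ : DualMod k A) :
    A →ₗ[k] k := φ

/-- The submodule of `D(A)` of functionals vanishing on `eA`; the quotient is `D(eA)`. -/
def killSub (k A : Type) [Field k] [Ring A] [Algebra k A] (e : A) :
    Submodule A (DualMod k A) where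
  carrier := {φ | ∀ x : A, φ.toLin (e * x) = 0}
  add_mem' := by
    intro φ ψ hφ hψ x
    show φ.toLin (e * x) + ψ.toLin (e * x) = 0
    rw [hφ x, hψ x, add_zero]
  zero_mem' := by intro x; rfl
  smul_mem' := by
    intro a φ hφ x
    show φ.toLin ((e * x) * a) = 0
    rw [mul_assoc]
    exact hφ (x * a)

/-- `D(eA)`, the dual of the right module `eA`, realised as the quotient of `D(A)` by the
functionals vanishing on `eA`. -/
def DeA (k A : Type) [Field k] [Ring A] [Algebra k A] (e : A) : ModuleCat.{0} A :=
  ModuleCat.of A (DualMod k A ⧸ killSub k A e)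


/-!
Both directions are dimension shifting along short exact sequences `0 → N → I → C → 0` in which
`I ∈ add D(eA)` is injective. Such an `I` is acyclic for `Ext(A/⟨e⟩, -)`: it is injective, and
`Hom(A/⟨e⟩, D(eA)) = 0` because `e` kills `A/⟨e⟩` while no nonzero element of `D(eA)` is killed
by `AeA`. Hence `Hom(A/⟨e⟩, N) = 0` and `Ext^(i+1)(A/⟨e⟩, N) ≅ Ext^i(A/⟨e⟩, C)`.
Conversely, `Hom(A/⟨e⟩, N) = 0` says that no nonzero element of `N` is killed by `AeA`, which is
exactly what makes `m ↦ (a ↦ cᵢ (a • m))ᵢ`, for the coordinate functionals `cᵢ` of a `k`-basis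
of `N`, an embedding of `N` into `D(eA)ⁿ`; one then continues with the cokernel.
`Ext` is computed as the cohomology of `Hom_A(P, -)` for a projective resolution `P`.
-/

universe v

section ExactLifts
variable {R : Type*} [Ring R] {M N P W : Type*} [AddCommGroup M] [Module R M]
  [AddCommGroup N] [Module R N] [AddCommGroup P] [Module R P] [AddCommGroup W] [Module R W]
  {f : M →ₗ[R] N} {g : N →ₗ[R] P}

theorem Function.Exact.exists_comp_eq_of_injective (hfg : Function.Exact f g)
    (hf : Function.Injective f) (u : W →ₗ[R] N) (hu : g ∘ₗ u = 0) :
    ∃ v : W →ₗ[R] M, f ∘ₗ v = u := by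
  refine ⟨(LinearEquiv.ofInjective f hf).symm.toLinearMap ∘ₗ
    u.codRestrict (LinearMap.range f) fun w => (hfg (u w)).1 (LinearMap.congr_fun hu w), ?_⟩
  ext w
  simp only [LinearMap.coe_comp, LinearEquiv.coe_coe, Function.comp_apply,
    LinearEquiv.ofInjective_symm_apply]
  rfl

theorem Function.Exact.exists_comp_eq_of_surjective (hfg : Function.Exact f g)
    (hg : Function.Surjective g) (u : N →ₗ[R] W) (hu : u ∘ₗ f = 0) :
    ∃ v : P →ₗ[R] W, v ∘ₗ g = u := by
  refine ⟨(LinearMap.range f).liftQ u ?_ ∘ₗ (hfg.linearEquivOfSurjective hg).symm.toLinearMap, ?_⟩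
  · rintro _ ⟨x, rfl⟩
    exact LinearMap.congr_fun hu x
  · ext x
    simp

theorem Function.Exact.exists_comp_eq_of_moduleInjective {Q : Type v} [AddCommGroup Q]
    [Module R Q] [Small.{v} R] [Module.Injective R Q] (hfg : Function.Exact f g)
    (u : N →ₗ[R] Q) (hu : u ∘ₗ f = 0) : ∃ v : P →ₗ[R] Q, v ∘ₗ g = u := by
  have hfg' : Function.Exact f g.rangeRestrict :=
    (LinearMap.range g).injective_subtype.comp_exact_iff_exact.1 hfg
  obtain ⟨v₀, rfl⟩ := hfg'.exists_comp_eq_of_surjective g.surjective_rangeRestrict u hu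
  obtain ⟨v, rfl⟩ := Module.Injective.extension_property R Q _ _ _
    (LinearMap.range g).injective_subtype v₀
  exact ⟨v, rfl⟩

end ExactLifts

lemma Module.Injective.of_retract {R : Type*} [Ring R] {N Q : Type v} [AddCommGroup N]
    [Module R N] [AddCommGroup Q] [Module R Q] [Module.Injective R Q] (i : N →ₗ[R] Q)
    (p : Q →ₗ[R] N) (hpi : p ∘ₗ i = LinearMap.id) : Module.Injective R N where
  out _ _ _ _ _ _ f hf g := by
    obtain ⟨h, hh⟩ := Module.Injective.out f hf (i ∘ₗ g)
    exact ⟨p ∘ₗ h, fun x => by simp [hh x, ← LinearMap.comp_apply p i, hpi]⟩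

lemma InAdd.hom_eq_zero {A : Type} [Ring A] {X M : ModuleCat.{0} A} (hM : InAdd A X M)
    {Y : Type*} [AddCommGroup Y] [Module A Y] (hX : ∀ g : Y →ₗ[A] X, g = 0)
    (g : Y →ₗ[A] M) : g = 0 := by
  obtain ⟨n, i, p, hpi⟩ := hM
  have hig : i ∘ₗ g = 0 := by
    ext y j
    exact LinearMap.congr_fun (hX (LinearMap.proj j ∘ₗ i ∘ₗ g)) y
  rw [← LinearMap.id_comp g, ← hpi, LinearMap.comp_assoc, hig, LinearMap.comp_zero]

section HomComplex
variable {A : Type} [Ring A]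

/-- `Hom_A(P, N)` is exact at degree `n`. At `n = 0`, where `0 - 1 = 0` and `P.d 0 0 = 0`,
this says that every cocycle vanishes. -/
def HomExactAt (P : ChainComplex (ModuleCat.{0} A) ℕ) (N : ModuleCat.{0} A) (n : ℕ) : Prop :=
  ∀ f : P.X n →ₗ[A] N, f ∘ₗ (P.d (n + 1) n).hom = 0 →
    ∃ g : P.X (n - 1) →ₗ[A] N, g ∘ₗ (P.d n (n - 1)).hom = f

lemma CategoryTheory.ProjectiveResolution.extVanish_iff_homExactAt {X : ModuleCat.{0} A}
    (P : ProjectiveResolution X) (n : ℕ) (N : ModuleCat.{0} A) :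
    ExtVanish A n X N ↔ HomExactAt P.complex N n := by
  have hprev : (ComplexShape.up ℕ).prev n = n - 1 := by cases n <;> simp
  rw [ExtVanish, (P.isoExt n N).isZero_iff, ← HomologicalComplex.exactAt_iff_isZero_homology,
    HomologicalComplex.exactAt_iff' _ (n - 1) n (n + 1) hprev (by simp),
    ShortComplex.moduleCat_exact_iff]
  change (∀ f : P.complex.X n ⟶ N, P.complex.d (n + 1) n ≫ f = 0 →
      ∃ g : P.complex.X (n - 1) ⟶ N, P.complex.d n (n - 1) ≫ g = f) ↔ _
  refine ModuleCat.homEquiv.forall_congr fun {f} => imp_congr ?_ <|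
    ModuleCat.homEquiv.exists_congr fun {g} => ?_ <;>
  simp only [ModuleCat.hom_ext_iff, ModuleCat.hom_comp, ModuleCat.hom_zero] <;> rfl

variable {P : ChainComplex (ModuleCat.{0} A) ℕ} {N I C : ModuleCat.{0} A}

lemma ChainComplex.hom_d_comp_hom_d (P : ChainComplex (ModuleCat.{0} A) ℕ) (i j k : ℕ) :
    (P.d j k).hom ∘ₗ (P.d i j).hom = 0 :=
  congrArg ModuleCat.Hom.hom (P.d_comp_d i j k)

lemma homExactAt_succ_iff (n : ℕ) :
    HomExactAt P N (n + 1) ↔ ∀ f : P.X (n + 1) →ₗ[A] N, f ∘ₗ (P.d (n + 2) (n + 1)).hom = 0 →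
      ∃ g : P.X n →ₗ[A] N, g ∘ₗ (P.d (n + 1) n).hom = f :=
  Iff.rfl

lemma homExactAt_zero_iff :
    HomExactAt P N 0 ↔ ∀ f : P.X 0 →ₗ[A] N, f ∘ₗ (P.d 1 0).hom = 0 → f = 0 := by
  simp only [HomExactAt, P.shape 0 0 (by simp), ModuleCat.hom_zero, LinearMap.comp_zero,
    exists_const]
  exact forall₂_congr fun _ _ => eq_comm

variable [∀ n, Module.Projective A (P.X n)] {ι : N →ₗ[A] I} {ρ : I →ₗ[A] C}

lemma homExactAt_succ_of_exact (hι : Function.Injective ι) (hρ : Function.Surjective ρ)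
    (hex : Function.Exact ι ρ) (n : ℕ) (hC : HomExactAt P C n) (hI : HomExactAt P I (n + 1)) :
    HomExactAt P N (n + 1) := by
  rw [homExactAt_succ_iff] at hI ⊢
  intro f hf
  obtain ⟨g, hg⟩ := hI (ι ∘ₗ f) (by rw [LinearMap.comp_assoc, hf, LinearMap.comp_zero])
  obtain ⟨h, hh⟩ := hC (ρ ∘ₗ g) (by
    rw [LinearMap.comp_assoc, hg, ← LinearMap.comp_assoc, hex.linearMap_comp_eq_zero,
      LinearMap.zero_comp])
  obtain ⟨h, rfl⟩ := Module.projective_lifting_property ρ h hρ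
  obtain ⟨m, hm⟩ := hex.exists_comp_eq_of_injective hι (g - h ∘ₗ (P.d n (n - 1)).hom) (by
    rw [LinearMap.comp_sub, ← LinearMap.comp_assoc, hh, sub_self])
  refine ⟨m, (LinearMap.cancel_left hι).1 ?_⟩
  rw [← LinearMap.comp_assoc, hm, LinearMap.sub_comp, LinearMap.comp_assoc,
    ChainComplex.hom_d_comp_hom_d, LinearMap.comp_zero, sub_zero, hg]

lemma homExactAt_of_exact_of_succ (hι : Function.Injective ι) (hρ : Function.Surjective ρ)
    (hex : Function.Exact ι ρ) (n : ℕ) (hN : HomExactAt P N (n + 1)) (hI : HomExactAt P I n) :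
    HomExactAt P C n := by
  intro f hf
  obtain ⟨g, rfl⟩ := Module.projective_lifting_property ρ f hρ
  obtain ⟨h, hh⟩ := hex.exists_comp_eq_of_injective hι (g ∘ₗ (P.d (n + 1) n).hom) (by
    rwa [← LinearMap.comp_assoc])
  obtain ⟨h', hh'⟩ : ∃ h' : P.X n →ₗ[A] N, h' ∘ₗ (P.d (n + 1) n).hom = h :=
    hN h ((LinearMap.cancel_left hι).1 (by
      rw [← LinearMap.comp_assoc, hh, LinearMap.comp_assoc, ChainComplex.hom_d_comp_hom_d,
        LinearMap.comp_zero, LinearMap.comp_zero]))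
  obtain ⟨u, hu⟩ := hI (g - ι ∘ₗ h') (by
    rw [LinearMap.sub_comp, LinearMap.comp_assoc, hh', hh, sub_self])
  refine ⟨ρ ∘ₗ u, ?_⟩
  rw [LinearMap.comp_assoc, hu, LinearMap.comp_sub, ← LinearMap.comp_assoc,
    hex.linearMap_comp_eq_zero, LinearMap.zero_comp, sub_zero]

namespace CategoryTheory.ProjectiveResolution

variable {X : ModuleCat.{0} A} (P : ProjectiveResolution X)

lemma homExactAt_zero_iff_hom_eq_zero :
    HomExactAt P.complex N 0 ↔ ∀ g : X →ₗ[A] N, g = 0 := by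
  let π₀ : P.complex.X 0 →ₗ[A] X := (P.π.f 0).hom
  have hπ : Function.Surjective π₀ := (ModuleCat.epi_iff_surjective _).1 inferInstance
  have hex : Function.Exact (P.complex.d 1 0).hom π₀ :=
    (ShortComplex.ShortExact.moduleCat_exact_iff_function_exact _).1 P.exact₀
  rw [_root_.homExactAt_zero_iff]
  constructor
  · intro h g
    refine (LinearMap.cancel_right hπ).1 (h _ ?_)
    rw [LinearMap.comp_assoc, hex.linearMap_comp_eq_zero, LinearMap.comp_zero]
  · intro h f hf
    obtain ⟨g, rfl⟩ := hex.exists_comp_eq_of_surjective hπ f hf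
    rw [h g, LinearMap.zero_comp]

lemma homExactAt_succ_of_injective [Module.Injective A I] (n : ℕ) :
    HomExactAt P.complex I (n + 1) := by
  rw [homExactAt_succ_iff]
  intro f hf
  exact ((ShortComplex.ShortExact.moduleCat_exact_iff_function_exact _).1
    (P.exact_succ n)).exists_comp_eq_of_moduleInjective f hf

end CategoryTheory.ProjectiveResolution

end HomComplex

section ExtVanish
variable {A : Type} [Ring A] {X N I C : ModuleCat.{0} A}

lemma extVanish_zero_iff : ExtVanish A 0 X N ↔ ∀ g : X →ₗ[A] N, g = 0 := by
  let P := projectiveResolution X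
  rw [P.extVanish_iff_homExactAt, P.homExactAt_zero_iff_hom_eq_zero]

lemma extVanish_succ_of_injective [Module.Injective A I] (n : ℕ) : ExtVanish A (n + 1) X I :=
  let P := projectiveResolution X
  (P.extVanish_iff_homExactAt _ _).2 (P.homExactAt_succ_of_injective n)

lemma InAdd.extVanish {Y : ModuleCat.{0} A} (hXY : ∀ g : X →ₗ[A] Y, g = 0) (hI : InAdd A Y I)
    [Module.Injective A I] : ∀ n, ExtVanish A n X I
  | 0 => extVanish_zero_iff.2 (hI.hom_eq_zero hXY)
  | n + 1 => extVanish_succ_of_injective n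

variable {ι : N →ₗ[A] I} {ρ : I →ₗ[A] C}

lemma extVanish_zero_of_injective (hι : Function.Injective ι) (hI : ExtVanish A 0 X I) :
    ExtVanish A 0 X N := by
  rw [extVanish_zero_iff] at hI ⊢
  intro g
  exact (LinearMap.cancel_left hι).1 (by rw [hI (ι ∘ₗ g), LinearMap.comp_zero])

lemma extVanish_succ_iff_of_exact (hι : Function.Injective ι) (hρ : Function.Surjective ρ)
    (hex : Function.Exact ι ρ) (hI : ∀ n, ExtVanish A n X I) (n : ℕ) :
    ExtVanish A (n + 1) X N ↔ ExtVanish A n X C := by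
  let P := projectiveResolution X
  simp only [P.extVanish_iff_homExactAt] at hI ⊢
  exact ⟨fun hN => homExactAt_of_exact_of_succ hι hρ hex n hN (hI n),
    fun hC => homExactAt_succ_of_exact hι hρ hex n hC (hI (n + 1))⟩

end ExtVanish

def HasAddCoresolution (A : Type) [Ring A] (X M : ModuleCat.{0} A) (m : ℕ) : Prop :=
  ∃ (I : ℕ → ModuleCat.{0} A) (ι : M →ₗ[A] I 0) (d : ∀ n : ℕ, I n →ₗ[A] I (n + 1)),
    (∀ n, Module.Injective A (I n)) ∧ Function.Injective ι ∧ Function.Exact ι (d 0) ∧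
    (∀ n, Function.Exact (d n) (d (n + 1))) ∧ ∀ n < m, InAdd A X (I n)

section Coresolution
variable {A : Type} [Ring A]

lemma hasAddCoresolution_zero (X M : ModuleCat.{0} A) : HasAddCoresolution A X M 0 := by
  let I := injectiveResolution M
  have hexact (S : ShortComplex (ModuleCat.{0} A)) (hS : S.Exact) : Function.Exact S.f S.g :=
    (ShortComplex.ShortExact.moduleCat_exact_iff_function_exact S).1 hS
  refine ⟨I.cocomplex.X, (I.ι.f 0).hom, fun n => (I.cocomplex.d n (n + 1)).hom,
    fun n => Module.injective_module_of_injective_object (inj := I.injective n) ..,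
    (ModuleCat.mono_iff_injective _).1 inferInstance, hexact _ I.exact₀,
    fun n => hexact _ (I.exact_succ n), fun n hn => absurd hn n.not_lt_zero⟩

lemma hasAddCoresolution_succ_iff {X M : ModuleCat.{0} A} {m : ℕ} :
    HasAddCoresolution A X M (m + 1) ↔
      ∃ (I C : ModuleCat.{0} A) (ι : M →ₗ[A] I) (ρ : I →ₗ[A] C), Module.Injective A I ∧
        InAdd A X I ∧ Function.Injective ι ∧ Function.Surjective ρ ∧ Function.Exact ι ρ ∧
        HasAddCoresolution A X C m := by
  constructor
  · rintro ⟨I, ι, d, hinj, hι, hex₀, hex, hadd⟩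
    refine ⟨I 0, ModuleCat.of A (LinearMap.range (d 0)), ι, (d 0).rangeRestrict, hinj 0,
      hadd 0 m.succ_pos, hι, (d 0).surjective_rangeRestrict,
      (LinearMap.range (d 0)).injective_subtype.comp_exact_iff_exact.1 hex₀,
      fun n => I (n + 1), (LinearMap.range (d 0)).subtype, fun n => d (n + 1),
      fun n => hinj (n + 1), (LinearMap.range (d 0)).injective_subtype,
      (d 0).surjective_rangeRestrict.comp_exact_iff_exact.1 (hex 0), fun n => hex (n + 1),
      fun n hn => hadd (n + 1) (Nat.succ_lt_succ hn)⟩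
  · rintro ⟨I, C, ι, ρ, hI, haddI, hι, hρ, hex, J, ι', d, hinj, hι', hex₀, hexs, hadd⟩
    refine ⟨fun | 0 => I | n + 1 => J n, ι, fun | 0 => ι' ∘ₗ ρ | n + 1 => d n,
      fun | 0 => hI | n + 1 => hinj n, hι, hex.comp_injective _ hι' (map_zero ι'),
      fun | 0 => hρ.comp_exact_iff_exact.2 hex₀ | n + 1 => hexs n,
      fun | 0, _ => haddI | n + 1, hn => hadd n (Nat.lt_of_succ_lt_succ hn)⟩

theorem HasAddCoresolution.extVanish {X Q : ModuleCat.{0} A} (hQX : ∀ g : Q →ₗ[A] X, g = 0) :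
    ∀ {m : ℕ} {M : ModuleCat.{0} A}, HasAddCoresolution A X M m → ∀ i < m, ExtVanish A i Q M
  | 0, _, _, i, hi => absurd hi i.not_lt_zero
  | m + 1, _, h, i, hi => by
    obtain ⟨I, C, ι, ρ, _, hadd, hι, hρ, hex, hC⟩ := hasAddCoresolution_succ_iff.1 h
    have hI := hadd.extVanish hQX
    cases i with
    | zero => exact extVanish_zero_of_injective hι (hI 0)
    | succ i =>
      exact (extVanish_succ_iff_of_exact hι hρ hex hI i).2
        (hC.extVanish hQX i (Nat.lt_of_succ_lt_succ hi))

end Coresolution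

namespace DualMod

variable {k A : Type} [Field k] [Ring A] [Algebra k A]

@[ext]
lemma ext {φ ψ : DualMod k A} (h : ∀ x, φ.toLin x = ψ.toLin x) : φ = ψ :=
  LinearMap.ext h

lemma smul_toLin (a : A) (φ : DualMod k A) (x : A) : (a • φ).toLin x = φ.toLin (x * a) := rfl

theorem baer : Module.Baer A (DualMod k A) := by
  intro J g
  -- extend `x ↦ (g x) 1` `k`-linearly from `J` to `A`; the extension `φ` gives `a ↦ a • φ`
  let G : J.restrictScalars k →ₗ[k] k :=
    { toFun := fun x => (g ⟨x, x.2⟩).toLin 1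
      map_add' := fun x y => by
        show (g (⟨x, x.2⟩ + ⟨y, y.2⟩)).toLin 1 = _
        rw [map_add]
        rfl
      map_smul' := fun c x => by
        have hcx : (⟨(c • x : A), (c • x).2⟩ : J) = algebraMap k A c • ⟨x, x.2⟩ :=
          Subtype.ext (Algebra.smul_def c (x : A))
        show (g ⟨(c • x : A), _⟩).toLin 1 = c • (g ⟨x, x.2⟩).toLin 1
        rw [hcx, map_smul, smul_toLin, one_mul, ← mul_one (algebraMap k A c),
          ← Algebra.smul_def, map_smul] }
  obtain ⟨φ, hφ⟩ := LinearMap.exists_extend G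
  refine ⟨LinearMap.toSpanSingleton A (DualMod k A) φ, fun x hx => ?_⟩
  ext y
  have hyx : y * x ∈ J := J.smul_mem y hx
  calc φ (y * x) = G ⟨y * x, hyx⟩ := LinearMap.congr_fun hφ ⟨y * x, hyx⟩
    _ = (g ⟨x, hx⟩).toLin y := by
      show (g (y • ⟨x, hx⟩)).toLin 1 = _
      rw [map_smul, smul_toLin, one_mul]

instance : Module.Injective A (DualMod k A) :=
  baer.injective

instance [FiniteDimensional k A] : Module.Finite A (DualMod k A) :=
  letI : Module k (DualMod k A) := inferInstanceAs (Module k (A →ₗ[k] k))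
  haveI : IsScalarTower k A (DualMod k A) := ⟨fun c a φ => by
    ext x
    show φ.toLin (x * (c • a)) = c • φ.toLin (x * a)
    rw [mul_smul_comm, map_smul]⟩
  haveI : Module.Finite k (DualMod k A) := inferInstanceAs (Module.Finite k (A →ₗ[k] k))
  Module.Finite.of_restrictScalars_finite k A _

end DualMod

namespace DeA

variable {k A : Type} [Field k] [Ring A] [Algebra k A] {e : A}

/-- Restriction of functionals to `eA`, seen inside `D(A)`; its kernel is `killSub k A e`. -/
def restrictIdem (k : Type) [Field k] [Algebra k A] (e : A) : DualMod k A →ₗ[A] DualMod k A where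
  toFun φ := (φ.toLin ∘ₗ LinearMap.mulLeft k e : A →ₗ[k] k)
  map_add' _ _ := rfl
  map_smul' a φ := by
    ext x
    show φ.toLin (e * x * a) = φ.toLin (e * (x * a))
    rw [mul_assoc]

def toDualMod (k : Type) [Field k] [Algebra k A] (e : A) : DeA k A e →ₗ[A] DualMod k A :=
  (killSub k A e).liftQ (restrictIdem k e) fun _ hφ => DualMod.ext hφ

lemma mkQ_comp_toDualMod (he : IsIdempotentElem e) :
    (killSub k A e).mkQ ∘ₗ toDualMod k e = LinearMap.id := by
  refine LinearMap.ext fun ψ => ?_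
  obtain ⟨φ, rfl⟩ := Submodule.Quotient.mk_surjective _ ψ
  refine (Submodule.Quotient.eq _).2 fun x => ?_
  show φ.toLin (e * (e * x)) - φ.toLin (e * x) = 0
  rw [← mul_assoc, he.eq, sub_self]

instance [FiniteDimensional k A] : Module.Finite A (DeA k A e) :=
  Module.Finite.of_surjective (killSub k A e).mkQ (Submodule.mkQ_surjective _)

lemma injective (he : IsIdempotentElem e) : Module.Injective A (DeA k A e) :=
  .of_retract _ _ (mkQ_comp_toDualMod he)

lemma eq_zero_of_forall_idem_smul_smul (he : IsIdempotentElem e) (ψ : DeA k A e)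
    (h : ∀ a : A, e • a • ψ = 0) : ψ = 0 := by
  obtain ⟨φ, rfl⟩ := Submodule.Quotient.mk_surjective _ ψ
  refine (Submodule.Quotient.mk_eq_zero _).2 fun x => ?_
  have hx := (Submodule.Quotient.mk_eq_zero _).1 (h x) 1
  rwa [mul_one, DualMod.smul_toLin, DualMod.smul_toLin, he.eq] at hx

lemma hom_eq_zero (he : IsIdempotentElem e) {Y : Type*} [AddCommGroup Y] [Module A Y]
    (hY : ∀ y : Y, e • y = 0) (g : Y →ₗ[A] DeA k A e) : g = 0 :=
  LinearMap.ext fun y => eq_zero_of_forall_idem_smul_smul he _ fun a => by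
    rw [← map_smul, ← map_smul, hY, map_zero]

end DeA

section Quotient
variable {A : Type} [Ring A] {e : A}

lemma quotMod_idem_smul (y : quotMod A e) : e • y = 0 := by
  obtain ⟨a, rfl⟩ := Submodule.Quotient.mk_surjective _ y
  exact (Submodule.Quotient.mk_eq_zero _).2 (Submodule.subset_span ⟨a, rfl⟩)

lemma eq_zero_of_forall_idem_mul_smul {N : Type*} [AddCommGroup N] [Module A N]
    (hN : ∀ g : quotMod A e →ₗ[A] N, g = 0) (m : N) (hm : ∀ b, (e * b) • m = 0) : m = 0 := by
  have hle : idemIdeal A e ≤ LinearMap.ker (LinearMap.toSpanSingleton A N m) := by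
    rw [idemIdeal, Submodule.span_le]
    rintro _ ⟨b, rfl⟩
    exact hm b
  calc m = (idemIdeal A e).liftQ _ hle (Submodule.Quotient.mk 1) := by simp
    _ = 0 := by rw [hN ((idemIdeal A e).liftQ _ hle)]; rfl

end Quotient

section Embedding
variable {k A : Type} [Field k] [Ring A] [Algebra k A]

def DualMod.ofFunctional {N : Type*} [AddCommGroup N] [Module A N] [Module k N]
    [IsScalarTower k A N] (χ : N →ₗ[k] k) : N →ₗ[A] DualMod k A where
  toFun m := χ ∘ₗ (LinearMap.toSpanSingleton A N m).restrictScalars k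
  map_add' m m' := by
    ext a
    show χ (a • (m + m')) = χ (a • m) + χ (a • m')
    rw [smul_add, map_add]
  map_smul' b m := by
    ext a
    show χ (a • b • m) = χ ((a * b) • m)
    rw [mul_smul]

theorem exists_injective_pi_DeA [FiniteDimensional k A] (e : A) {N : Type} [AddCommGroup N]
    [Module A N] [Module.Finite A N] (hN : ∀ m : N, (∀ b, (e * b) • m = 0) → m = 0) :
    ∃ (n : ℕ) (ν : N →ₗ[A] Fin n → DeA k A e), Function.Injective ν := by
  let _ : Module k N := Module.compHom N (algebraMap k A)
  have : IsScalarTower k A N := ⟨fun c a m => by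
    show (c • a) • m = algebraMap k A c • a • m
    rw [Algebra.smul_def, mul_smul]⟩
  have : Module.Finite k N := Module.Finite.trans A N
  let B := Module.finBasis k N
  refine ⟨_, LinearMap.pi fun i => (killSub k A e).mkQ ∘ₗ DualMod.ofFunctional (B.coord i), ?_⟩
  rw [← LinearMap.ker_eq_bot, LinearMap.ker_eq_bot']
  intro m hm
  exact hN m fun b => B.forall_coord_eq_zero_iff.1 fun i =>
    (Submodule.Quotient.mk_eq_zero _).1 (congrFun hm i) b

end Embedding

theorem hasAddCoresolution_DeA_of_extVanish {k A : Type} [Field k] [Ring A] [Algebra k A]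
    [FiniteDimensional k A] {e : A} (he : IsIdempotentElem e) :
    ∀ (m : ℕ) (N : ModuleCat.{0} A) [Module.Finite A N],
      (∀ i < m, ExtVanish A i (quotMod A e) N) → HasAddCoresolution A (DeA k A e) N m
  | 0, N, _, _ => hasAddCoresolution_zero _ N
  | m + 1, N, _, hN => by
    obtain ⟨n, ν, hν⟩ := exists_injective_pi_DeA (k := k) e
      (eq_zero_of_forall_idem_mul_smul (extVanish_zero_iff.1 (hN 0 m.succ_pos)))
    have := DeA.injective (k := k) he
    let I := ModuleCat.of A (Fin n → DeA k A e)
    have hI : InAdd A (DeA k A e) I := ⟨n, LinearMap.id, LinearMap.id, rfl⟩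
    have hIext := hI.extVanish (DeA.hom_eq_zero he quotMod_idem_smul)
    refine hasAddCoresolution_succ_iff.2 ⟨I, ModuleCat.of A (I ⧸ LinearMap.range ν), ν,
      (LinearMap.range ν).mkQ, inferInstance, hI, hν, (LinearMap.range ν).mkQ_surjective,
      LinearMap.exact_map_mkQ_range ν, hasAddCoresolution_DeA_of_extVanish he m _ fun i hi =>
        (extVanish_succ_iff_of_exact hν (LinearMap.range ν).mkQ_surjective
          (LinearMap.exact_map_mkQ_range ν) hIext i).1 (hN (i + 1) (Nat.succ_lt_succ hi))⟩

/-- `M` has an injective coresolution whose first `l+1` terms lie in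
`add D(eA)` iff `Ext^i_A(A/⟨e⟩, M) = 0` for all `0 ≤ i ≤ l`. -/
theorem stmt_0 (k A : Type) [Field k] [Ring A] [Algebra k A] [FiniteDimensional k A]
    (e : A) (he : IsIdempotentElem e)
    (M : ModuleCat.{0} A) (hM : Module.Finite A M) (l : ℕ) :
    (∃ (I : ℕ → ModuleCat.{0} A) (ι : M →ₗ[A] I 0) (d : ∀ n : ℕ, I n →ₗ[A] I (n + 1)),
      (∀ n, Module.Injective A (I n)) ∧
      Function.Injective ι ∧
      Function.Exact ι (d 0) ∧
      (∀ n, Function.Exact (d n) (d (n + 1))) ∧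
      (∀ n ≤ l, InAdd A (DeA k A e) (I n)))
    ↔ (∀ i ≤ l, ExtVanish A i (quotMod A e) M) := by
  have key : HasAddCoresolution A (DeA k A e) M (l + 1) ↔
      ∀ i < l + 1, ExtVanish A i (quotMod A e) M :=
    ⟨fun h => h.extVanish (DeA.hom_eq_zero he quotMod_idem_smul),
      hasAddCoresolution_DeA_of_extVanish he (l + 1) M⟩
  simpa only [HasAddCoresolution, Nat.lt_succ_iff] using key

end
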